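/- For v ∈ ℓ²(ℤ), the discrete Laplacian norm identity holds: ‖D₊D₋v‖²_{ℓ²_Δ} = (4/Δx²)‖D₊v‖²_{ℓ²_Δ} − (4/Δx²)‖Dv‖²_{ℓ²_Δ}. -/
import Mathlib


noncomputable section
open scoped BigOperators

/-- forward shift -/
def Sp (v : ℤ → ℝ) : ℤ → ℝ := fun j => v (j + 1)
/-- backward shift -/
def Sm (v : ℤ → ℝ) : ℤ → ℝ := fun j => v (j - 1)
/-- forward discrete derivative -/
def Dp (dx : ℝ) (v : ℤ → ℝ) : ℤ → ℝ := fun j => (v (j + 1) - v j) / dx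
/-- backward discrete derivative -/
def Dm (dx : ℝ) (v : ℤ → ℝ) : ℤ → ℝ := fun j => (v j - v (j - 1)) / dx
/-- centered discrete derivative -/
def Dc (dx : ℝ) (v : ℤ → ℝ) : ℤ → ℝ := fun j => (v (j + 1) - v (j - 1)) / (2 * dx)
/-- discrete Laplacian D₊D₋ -/
def DpDm (dx : ℝ) (v : ℤ → ℝ) : ℤ → ℝ := fun j => (v (j + 1) - 2 * v j + v (j - 1)) / dx ^ 2
/-- discrete inner product ⟨v,w⟩ = Δx ∑ v_j w_j -/
def ip (dx : ℝ) (v w : ℤ → ℝ) : ℝ := dx * ∑' j : ℤ, v j * w j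
/-- squared ℓ²_Δ norm -/
def n2sq (dx : ℝ) (v : ℤ → ℝ) : ℝ := dx * ∑' j : ℤ, (v j) ^ 2
/-- ℓ²_Δ norm -/
def nrm (dx : ℝ) (v : ℤ → ℝ) : ℝ := Real.sqrt (n2sq dx v)
/-- sup norm -/
def supn (v : ℤ → ℝ) : ℝ := ⨆ j : ℤ, |v j|
/-- v ∈ ℓ²(ℤ) -/
def l2 (v : ℤ → ℝ) : Prop := Summable (fun j : ℤ => (v j) ^ 2)
/-- v ∈ ℓ^∞(ℤ) -/
def linf (v : ℤ → ℝ) : Prop := BddAbove (Set.range fun j : ℤ => |v j|)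


lemma prodSummable (f g : ℤ → ℝ) (hf : Summable fun j => f j ^ 2)
    (hg : Summable fun j => g j ^ 2) : Summable fun j => f j * g j := by
  apply Summable.of_abs
  apply Summable.of_nonneg_of_le (fun _ => abs_nonneg _)
    (fun j => ?_) ((hf.add hg).div_const 2)
  rw [abs_mul]
  nlinarith [sq_nonneg (|f j| - |g j|), sq_abs (f j), sq_abs (g j)]

lemma shiftSummable (v : ℤ → ℝ) (hv : Summable fun j => v j ^ 2) (k : ℤ) :
    Summable fun j => v (j + k) ^ 2 :=
  ((Equiv.addRight k).summable_iff (f := fun j => v j ^ 2)).mpr hv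

lemma shiftSummable' (v : ℤ → ℝ) (hv : Summable fun j => v j ^ 2) (k : ℤ) :
    Summable fun j => v (j - k) ^ 2 :=
  ((Equiv.subRight k).summable_iff (f := fun j => v j ^ 2)).mpr hv

lemma tsum_shift (f : ℤ → ℝ) (k : ℤ) : ∑' j : ℤ, f (j + k) = ∑' j : ℤ, f j :=
  (Equiv.addRight k).tsum_eq f

theorem IPP4 (dx : ℝ) (hdx : 0 < dx) (v : ℤ → ℝ) (hv : l2 v) :
    n2sq dx (DpDm dx v)
      = (4 / dx ^ 2) * n2sq dx (Dp dx v) - (4 / dx ^ 2) * n2sq dx (Dc dx v) := by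
  have hd : dx ≠ 0 := ne_of_gt hdx
  have h0 : Summable fun j : ℤ => v j ^ 2 := hv
  have h1 : Summable fun j : ℤ => v (j + 1) ^ 2 := shiftSummable v h0 1
  have hm1 : Summable fun j : ℤ => v (j - 1) ^ 2 := shiftSummable' v h0 1
  have p10 : Summable fun j : ℤ => v (j + 1) * v j := prodSummable _ _ h1 h0
  have p1m1 : Summable fun j : ℤ => v (j + 1) * v (j - 1) := prodSummable _ _ h1 hm1
  have p0m1 : Summable fun j : ℤ => v j * v (j - 1) := prodSummable _ _ h0 hm1
  set S : ℝ := ∑' j : ℤ, v j ^ 2 with hS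
  set A : ℝ := ∑' j : ℤ, v (j + 1) * v j with hA
  set B : ℝ := ∑' j : ℤ, v (j + 1) * v (j - 1) with hB
  -- shifted sums
  have eS1 : ∑' j : ℤ, v (j + 1) ^ 2 = S := tsum_shift (fun j => v j ^ 2) 1
  have eSm1 : ∑' j : ℤ, v (j - 1) ^ 2 = S := by
    have := tsum_shift (fun j => v (j - 1) ^ 2) 1
    simpa using this.symm
  have eA' : ∑' j : ℤ, v j * v (j - 1) = A := by
    have := tsum_shift (fun j => v j * v (j - 1)) 1
    simpa using this.symm
  -- the three tsums
  have tDp : ∑' j : ℤ, ((v (j + 1) - v j) / dx) ^ 2 = (S + S - 2 * A) / dx ^ 2 := by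
    have : (fun j : ℤ => ((v (j + 1) - v j) / dx) ^ 2)
        = fun j : ℤ => (v (j + 1) ^ 2 + v j ^ 2 - 2 * (v (j + 1) * v j)) / dx ^ 2 := by
      funext j; field_simp; ring
    rw [this, tsum_div_const, Summable.tsum_sub (h1.add h0) (p10.mul_left 2), Summable.tsum_add h1 h0,
      tsum_mul_left, eS1]
  have tDc : ∑' j : ℤ, ((v (j + 1) - v (j - 1)) / (2 * dx)) ^ 2
      = (S + S - 2 * B) / (4 * dx ^ 2) := by
    have : (fun j : ℤ => ((v (j + 1) - v (j - 1)) / (2 * dx)) ^ 2)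
        = fun j : ℤ => (v (j + 1) ^ 2 + v (j - 1) ^ 2 - 2 * (v (j + 1) * v (j - 1)))
            / (4 * dx ^ 2) := by
      funext j; field_simp; ring
    rw [this, tsum_div_const, Summable.tsum_sub (h1.add hm1) (p1m1.mul_left 2), Summable.tsum_add h1 hm1,
      tsum_mul_left, eS1, eSm1]
  have tL : ∑' j : ℤ, ((v (j + 1) - 2 * v j + v (j - 1)) / dx ^ 2) ^ 2
      = (S + 4 * S + S - 4 * A + 2 * B - 4 * A) / dx ^ 4 := by
    have hfun : (fun j : ℤ => ((v (j + 1) - 2 * v j + v (j - 1)) / dx ^ 2) ^ 2)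
        = fun j : ℤ => (v (j + 1) ^ 2 + 4 * v j ^ 2 + v (j - 1) ^ 2
            - 4 * (v (j + 1) * v j) + 2 * (v (j + 1) * v (j - 1))
            - 4 * (v j * v (j - 1))) / dx ^ 4 := by
      funext j; field_simp; ring
    have s1 : Summable fun j : ℤ => v (j + 1) ^ 2 + 4 * v j ^ 2 + v (j - 1) ^ 2 :=
      (h1.add (h0.mul_left 4)).add hm1
    have s2 := s1.sub (p10.mul_left 4)
    have s3 := s2.add (p1m1.mul_left 2)
    rw [hfun, tsum_div_const, Summable.tsum_sub s3 (p0m1.mul_left 4), Summable.tsum_add s2 (p1m1.mul_left 2),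
      Summable.tsum_sub s1 (p10.mul_left 4), Summable.tsum_add (h1.add (h0.mul_left 4)) hm1,
      Summable.tsum_add h1 (h0.mul_left 4), tsum_mul_left, tsum_mul_left, tsum_mul_left, tsum_mul_left,
      eS1, eSm1, eA']
  show dx * ∑' j : ℤ, ((v (j + 1) - 2 * v j + v (j - 1)) / dx ^ 2) ^ 2
      = 4 / dx ^ 2 * (dx * ∑' j : ℤ, ((v (j + 1) - v j) / dx) ^ 2)
        - 4 / dx ^ 2 * (dx * ∑' j : ℤ, ((v (j + 1) - v (j - 1)) / (2 * dx)) ^ 2)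
  rw [tDp, tDc, tL]
  field_simp
  ring
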